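/- arXiv:1702.01553 — 3 statements merged into one kernel-verified Lean document; each statement's English description precedes it below -/
import Mathlib

section
/- Suppose H : Ω × ℝⁿ × ℝ^{mn} → ℝ is K-Lipschitz in its last argument: |H(t,x,p) - H(t,x,v)| ≤ K‖p - v‖. Let Q be a linear map with operator norm K whose adjoint attains its norm in every direction (e.g. Q = K·Id when the domains match). Define L(t,x,u,v) = H(t,x,v) - ⟨Qu, v⟩, U the closed unit ball, V the closed ball of radius P. Then for all (t,x) and all p with ‖p‖ ≤ P: H(t,x,p) = max over v ∈ V of min over u ∈ U of (⟨Qu, p⟩ + L(t,x,u,v)). -/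
/-!
For fixed `v`, the inner minimum over the unit ball is
`H v + min_u ⟪u, Q† (p - v)⟫ = H v - ‖Q† (p - v)‖ = H v - K ‖p - v‖`.
By the Lipschitz bound this never exceeds `H p`, and equals it at `v = p`.
-/

open Metric RealInnerProductSpace

theorem isLeast_image_inner_closedBall {E : Type*} [NormedAddCommGroup E]
    [InnerProductSpace ℝ E] (a : E) :
    IsLeast ((⟪·, a⟫) '' closedBall (0 : E) 1) (-‖a‖) := by
  refine ⟨⟨-(‖a‖⁻¹ • a), ?_, ?_⟩, ?_⟩
  · simpa [norm_smul] using inv_mul_le_one_of_le₀ le_rfl (norm_nonneg a)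
  · simp only [inner_neg_left, real_inner_smul_left, real_inner_self_eq_norm_sq]
    rcases eq_or_ne ‖a‖ 0 with h | h
    · simp [h]
    · field_simp
  · rintro _ ⟨u, hu, rfl⟩
    have hu : ‖u‖ ≤ 1 := by simpa using hu
    calc -‖a‖ ≤ -(‖u‖ * ‖a‖) := by gcongr; exact mul_le_of_le_one_left (norm_nonneg a) hu
      _ ≤ ⟪u, a⟫ := neg_le_of_abs_le (abs_real_inner_le_norm u a)

theorem isLeast_image_inner_apply_closedBall {E F : Type*}
    [NormedAddCommGroup E] [InnerProductSpace ℝ E] [CompleteSpace E]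
    [NormedAddCommGroup F] [InnerProductSpace ℝ F] [CompleteSpace F]
    (T : E →L[ℝ] F) (w : F) :
    IsLeast ((⟪T ·, w⟫) '' closedBall (0 : E) 1) (-‖ContinuousLinearMap.adjoint T w‖) := by
  simpa only [ContinuousLinearMap.adjoint_inner_right] using
    isLeast_image_inner_closedBall (ContinuousLinearMap.adjoint T w)

theorem setOf_exists_isLeast_eq_image {ι α : Type*} [PartialOrder α] {S : ι → Set α} {a : ι → α}
    (ha : ∀ i, IsLeast (S i) (a i)) (s : Set ι) :
    {y | ∃ i ∈ s, IsLeast (S i) y} = a '' s := by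
  ext y
  constructor
  · rintro ⟨i, hi, hy⟩
    exact ⟨i, hi, (ha i).unique hy⟩
  · rintro ⟨i, hi, rfl⟩
    exact ⟨i, hi, ha i⟩

theorem isGreatest_image_sub_mul_norm_sub {E : Type*} [SeminormedAddCommGroup E]
    {f : E → ℝ} {s : Set E} {K : ℝ} {p : E} (hp : p ∈ s)
    (hf : ∀ v ∈ s, f v - f p ≤ K * ‖p - v‖) :
    IsGreatest ((fun v ↦ f v - K * ‖p - v‖) '' s) (f p) :=
  ⟨⟨p, hp, by simp⟩, by rintro _ ⟨v, hv, rfl⟩; linarith [hf v hv]⟩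

theorem maxmin_representation_lipschitz_hamiltonian_general {m n N : ℕ}
    (Ω : Set (EuclideanSpace ℝ (Fin m)))
    (H : EuclideanSpace ℝ (Fin m) → EuclideanSpace ℝ (Fin n) →
      EuclideanSpace ℝ (Fin N) → ℝ)
    (K P : ℝ)
    (hLip : ∀ t ∈ Ω, ∀ (x : EuclideanSpace ℝ (Fin n))
      (p v : EuclideanSpace ℝ (Fin N)), |H t x p - H t x v| ≤ K * ‖p - v‖)
    (Q : EuclideanSpace ℝ (Fin N) →L[ℝ] EuclideanSpace ℝ (Fin N))
    (hQadj : ∀ w : EuclideanSpace ℝ (Fin N),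
      ‖ContinuousLinearMap.adjoint Q w‖ = K * ‖w‖)
    (L : EuclideanSpace ℝ (Fin m) → EuclideanSpace ℝ (Fin n) →
      EuclideanSpace ℝ (Fin N) → EuclideanSpace ℝ (Fin N) → ℝ)
    (hL : ∀ t x u v, L t x u v = H t x v - ⟪Q u, v⟫) :
    ∀ t ∈ Ω, ∀ (x : EuclideanSpace ℝ (Fin n)) (p : EuclideanSpace ℝ (Fin N)),
      ‖p‖ ≤ P →
      IsGreatest {y : ℝ | ∃ v ∈ closedBall (0 : EuclideanSpace ℝ (Fin N)) P,
        IsLeast {z : ℝ | ∃ u ∈ closedBall (0 : EuclideanSpace ℝ (Fin N)) 1,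
          z = ⟪Q u, p⟫ + L t x u v} y} (H t x p) := by
  intro t ht x p hp
  have hmin : ∀ v, IsLeast {z : ℝ | ∃ u ∈ closedBall (0 : EuclideanSpace ℝ (Fin N)) 1,
      z = ⟪Q u, p⟫ + L t x u v} (H t x v - K * ‖p - v‖) := by
    intro v
    have hset : {z : ℝ | ∃ u ∈ closedBall (0 : EuclideanSpace ℝ (Fin N)) 1,
        z = ⟪Q u, p⟫ + L t x u v} = (H t x v + ·) '' ((⟪Q ·, p - v⟫) '' closedBall 0 1) := by
      ext z
      simp only [Set.mem_ofPred_eq, Set.image_image, Set.mem_image, inner_sub_right, hL]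
      exact exists_congr fun u ↦ and_congr_right fun _ ↦ by constructor <;> intro h <;> linarith
    rw [hset, sub_eq_add_neg, ← hQadj]
    exact (monotone_id.const_add _).map_isLeast (isLeast_image_inner_apply_closedBall Q _)
  rw [setOf_exists_isLeast_eq_image hmin]
  exact isGreatest_image_sub_mul_norm_sub (by simpa using hp)
    fun v _ ↦ le_of_abs_le ((abs_sub_comm _ _).trans_le (hLip t ht x p v))

/-- Lemma 6.1: max-min representation of a Lipschitz Hamiltonian.
`H` is `K`-Lipschitz in its last variable, `Q` is a linear map of norm `K` whose
adjoint attains its norm in every direction, `L t x u v = H t x v - ⟪Q u, v⟫`,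
`U` is the closed unit ball and `V` the closed ball of radius `P`.  Then for
`‖p‖ ≤ P`, `H t x p = max_{v ∈ V} min_{u ∈ U} (⟪Q u, p⟫ + L t x u v)`. -/
theorem maxmin_representation_lipschitz_hamiltonian {m n N : ℕ}
    (Ω : Set (EuclideanSpace ℝ (Fin m)))
    (H : EuclideanSpace ℝ (Fin m) → EuclideanSpace ℝ (Fin n) →
      EuclideanSpace ℝ (Fin N) → ℝ)
    (K P : ℝ) (hP : 0 < P)
    (hLip : ∀ t ∈ Ω, ∀ (x : EuclideanSpace ℝ (Fin n))
      (p v : EuclideanSpace ℝ (Fin N)), |H t x p - H t x v| ≤ K * ‖p - v‖)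
    (Q : EuclideanSpace ℝ (Fin N) →L[ℝ] EuclideanSpace ℝ (Fin N))
    (hQ : ‖Q‖ = K)
    (hQadj : ∀ w : EuclideanSpace ℝ (Fin N),
      ‖ContinuousLinearMap.adjoint Q w‖ = K * ‖w‖)
    (L : EuclideanSpace ℝ (Fin m) → EuclideanSpace ℝ (Fin n) →
      EuclideanSpace ℝ (Fin N) → EuclideanSpace ℝ (Fin N) → ℝ)
    (hL : ∀ t x u v, L t x u v = H t x v - ⟪Q u, v⟫) :
    ∀ t ∈ Ω, ∀ (x : EuclideanSpace ℝ (Fin n)) (p : EuclideanSpace ℝ (Fin N)),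
      ‖p‖ ≤ P →
      IsGreatest {y : ℝ | ∃ v ∈ closedBall (0 : EuclideanSpace ℝ (Fin N)) P,
        IsLeast {z : ℝ | ∃ u ∈ closedBall (0 : EuclideanSpace ℝ (Fin N)) 1,
          z = ⟪Q u, p⟫ + L t x u v} y} (H t x p) :=
  maxmin_representation_lipschitz_hamiltonian_general Ω H K P hLip Q hQadj L hL
end

section
/- Let H : Ω × ℝⁿ × ℝ^{mn} → ℝ be Lipschitz in p with constant K and positively homogeneous in p: H(t,x,λp) = λ H(t,x,p) for all λ ≥ 0. Then there exist compact sets U ⊆ ℝ^{2n'}, V ⊆ ℝ^{2mn'} (for suitable n') and bounded functions X : Ω × ℝⁿ × U × V → ℝ^{mn} such that H(t,x,p) = max over v ∈ V of min over u ∈ U of ⟨X(t,x,u,v), p⟩ for all t, x, p. -/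
/-!
For a unit vector `q`, minimizing `⟪maxMinVector H K q a, p⟫` over `‖a‖ ≤ 1` gives a minorant
of `H` that agrees with `H` on the ray `ℝ≥0 q`. Agreement on the ray is homogeneity; the
minorant property is the Lipschitz bound between `p` and `⟪q, p⟫ q` when `⟪q, p⟫ ≥ 0`, and the
bound `|H| ≤ K ‖·‖` when `⟪q, p⟫ < 0`. Maximizing over `q` recovers `H`. Both control sets are
the unit ball of `ℝ^{mn}`, embedded linearly into `ℝ^{2n'}` and `ℝ^{2mn'}` with `n' = mn`.
-/

open RealInnerProductSpace NormedSpace Metric Function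
open scoped NNReal

theorem isGreatest_setOf_isLeast {α β γ : Type*} [Preorder γ] {U : Set α} {V : Set β}
    {f : β → α → γ} {h : γ} {u₀ : α} {v₀ : β} (hu₀ : u₀ ∈ U) (hv₀ : v₀ ∈ V)
    (hsaddle : ∀ u ∈ U, h ≤ f v₀ u) (heq : f v₀ u₀ = h) (hle : ∀ v ∈ V, ∃ u ∈ U, f v u ≤ h) :
    IsGreatest {y | ∃ v ∈ V, IsLeast {z | ∃ u ∈ U, z = f v u} y} h := by
  refine ⟨⟨v₀, hv₀, ⟨u₀, hu₀, heq.symm⟩, ?_⟩, ?_⟩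
  · rintro z ⟨u, hu, rfl⟩
    exact hsaddle u hu
  · rintro y ⟨v, hv, hy⟩
    obtain ⟨u, hu, hfu⟩ := hle v hv
    exact (hy.2 ⟨u, hu, rfl⟩).trans hfu

theorem setOf_isLeast_image_leftInverse {α β α' β' γ : Type*} [Preorder γ]
    {ιU : α → α'} {πU : α' → α} {ιV : β → β'} {πV : β' → β}
    (hU : LeftInverse πU ιU) (hV : LeftInverse πV ιV) (U : Set α) (V : Set β) (f : β → α → γ) :
    {y | ∃ v ∈ ιV '' V, IsLeast {z | ∃ u ∈ ιU '' U, z = f (πV v) (πU u)} y} =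
      {y | ∃ v ∈ V, IsLeast {z | ∃ u ∈ U, z = f v u} y} := by
  simp only [Set.exists_mem_image, hU.eq, hV.eq]

theorem exists_continuousLinearMap_leftInverse_of_finrank_le {𝕜 E F : Type*}
    [NontriviallyNormedField 𝕜] [CompleteSpace 𝕜]
    [NormedAddCommGroup E] [NormedSpace 𝕜 E] [FiniteDimensional 𝕜 E]
    [NormedAddCommGroup F] [NormedSpace 𝕜 F] [FiniteDimensional 𝕜 F]
    (h : Module.finrank 𝕜 E ≤ Module.finrank 𝕜 F) :
    ∃ (ι : E →L[𝕜] F) (π : F →L[𝕜] E), LeftInverse π ι := by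
  obtain ⟨f, hf⟩ := finrank_le_iff_exists_linearMap.mp h
  exact ⟨_, ContinuousLinearMap.HasLeftInverse.of_injective_of_finiteDimensional
    (f := LinearMap.toContinuousLinearMap f) hf⟩

section Normalize

variable {V : Type*} [NormedAddCommGroup V] [NormedSpace ℝ V]

theorem NormedSpace.norm_normalize_le (x : V) : ‖normalize x‖ ≤ 1 := by
  by_cases hx : x = 0
  · simp [hx]
  · exact (norm_normalize hx).le

theorem NormedSpace.normalize_eq_zero_or_norm_eq_one (x : V) :
    normalize x = 0 ∨ ‖normalize x‖ = 1 :=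
  (em (x = 0)).imp (normalize_eq_zero_iff x).2 norm_normalize

theorem NormedSpace.inner_normalize_self {E : Type*} [NormedAddCommGroup E]
    [InnerProductSpace ℝ E] (x : E) : ⟪normalize x, x⟫ = ‖x‖ := by
  by_cases hx : x = 0
  · simp [hx]
  · rw [NormedSpace.normalize, real_inner_smul_left, real_inner_self_eq_norm_sq]
    field_simp [norm_ne_zero_iff.2 hx]

end Normalize

section PosHomogeneous

variable {V : Type*} [NormedAddCommGroup V] [NormedSpace ℝ V] {H : V → ℝ} {K : ℝ≥0}

theorem map_zero_of_posHomogeneous (hHom : ∀ (p : V) (c : ℝ), 0 ≤ c → H (c • p) = c * H p) :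
    H 0 = 0 := by
  simpa using hHom 0 0 le_rfl

theorem abs_le_of_lipschitzWith_posHomogeneous (hLip : LipschitzWith K H)
    (hHom : ∀ (p : V) (c : ℝ), 0 ≤ c → H (c • p) = c * H p) (p : V) : |H p| ≤ K * ‖p‖ := by
  simpa [map_zero_of_posHomogeneous hHom, Real.dist_eq] using hLip.dist_le_mul p 0

theorem smul_sub_le_of_lipschitzWith_posHomogeneous (hLip : LipschitzWith K H)
    (hHom : ∀ (p : V) (c : ℝ), 0 ≤ c → H (c • p) = c * H p) {c : ℝ} (hc : 0 ≤ c) (p q : V) :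
    c * H q - K * ‖p - c • q‖ ≤ H p := by
  have h := hLip.dist_le_mul p (c • q)
  rw [Real.dist_eq, dist_eq_norm, hHom q c hc] at h
  linarith [neg_abs_le (H p - c * H q)]

end PosHomogeneous

section MaxMinVector

variable {E : Type*} [NormedAddCommGroup E] [InnerProductSpace ℝ E] {H : E → ℝ} {K : ℝ≥0}

/-- For `‖q‖ = 1`, the minimum of `a ↦ ⟪maxMinVector H K q a, p⟫` over the unit ball is
`H q ⟪q, p⟫ - 2K ‖p - ⟪q, p⟫ q‖` when `⟪q, p⟫ ≥ 0` and `H q ⟪q, p⟫ - 2K ‖p‖` otherwise. -/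
def maxMinVector (H : E → ℝ) (K : ℝ) (q a : E) : E :=
  (H q + 2 * K * (|⟪a, q⟫| - ⟪a, q⟫)) • q + (2 * K) • a

theorem norm_maxMinVector_le (hLip : LipschitzWith K H)
    (hHom : ∀ (p : E) (c : ℝ), 0 ≤ c → H (c • p) = c * H p) {q a : E} (hq : ‖q‖ ≤ 1)
    (ha : ‖a‖ ≤ 1) : ‖maxMinVector H K q a‖ ≤ 7 * K := by
  have hHq : |H q| ≤ K := (abs_le_of_lipschitzWith_posHomogeneous hLip hHom q).trans
    (mul_le_of_le_one_right K.2 hq)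
  have ht : |⟪a, q⟫| ≤ 1 :=
    (abs_real_inner_le_norm a q).trans (mul_le_one₀ ha (norm_nonneg q) hq)
  have hcoef : |H q + 2 * K * (|⟪a, q⟫| - ⟪a, q⟫)| ≤ 5 * K := by
    have h₀ : 0 ≤ |⟪a, q⟫| - ⟪a, q⟫ := sub_nonneg.2 (le_abs_self _)
    have h₂ : |⟪a, q⟫| - ⟪a, q⟫ ≤ 2 := by linarith [neg_abs_le ⟪a, q⟫]
    rw [abs_le] at hHq ⊢
    constructor <;> nlinarith [mul_nonneg K.2 h₀, mul_le_mul_of_nonneg_left h₂ K.2]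
  calc ‖maxMinVector H K q a‖
      ≤ |H q + 2 * K * (|⟪a, q⟫| - ⟪a, q⟫)| * ‖q‖ + 2 * K * ‖a‖ := by
        refine (norm_add_le _ _).trans_eq ?_
        rw [norm_smul, norm_smul, Real.norm_eq_abs, Real.norm_of_nonneg (by positivity)]
    _ ≤ 5 * K * 1 + 2 * K * 1 := by gcongr
    _ = 7 * K := by ring

theorem inner_maxMinVector_normalize_self
    (hHom : ∀ (p : E) (c : ℝ), 0 ≤ c → H (c • p) = c * H p) (p a : E) :
    ⟪maxMinVector H K (normalize p) a, p⟫ = H p + 2 * K * |⟪a, normalize p⟫| * ‖p‖ := by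
  have hp : ‖p‖ • normalize p = p := norm_smul_normalize p
  have hHp : H p = ‖p‖ * H (normalize p) := by
    rw [← hHom _ _ (norm_nonneg p), hp]
  have hap : ⟪a, p⟫ = ‖p‖ * ⟪a, normalize p⟫ := by
    conv_lhs => rw [← hp]
    exact real_inner_smul_right _ _ _
  rw [maxMinVector, inner_add_left, real_inner_smul_left, real_inner_smul_left,
    inner_normalize_self, hap, hHp]
  ring

theorem inner_maxMinVector_normalize_neg_le (hLip : LipschitzWith K H)
    (hHom : ∀ (p : E) (c : ℝ), 0 ≤ c → H (c • p) = c * H p) {q p : E} (hq : ‖q‖ ≤ 1)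
    (hneg : ⟪q, p⟫ < 0) : ⟪maxMinVector H K q (normalize (-p)), p⟫ ≤ H p := by
  set c := ⟪q, p⟫ with hc
  have ht : 0 ≤ ⟪normalize (-p), q⟫ := by
    rw [normalize_neg, inner_neg_left, NormedSpace.normalize, real_inner_smul_left,
      real_inner_comm, ← hc]
    exact neg_nonneg.2 (mul_nonpos_of_nonneg_of_nonpos (by positivity) hneg.le)
  have hval : ⟪maxMinVector H K q (normalize (-p)), p⟫ = H q * c - 2 * K * ‖p‖ := by
    rw [maxMinVector, abs_of_nonneg ht, sub_self, mul_zero, add_zero, inner_add_left,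
      real_inner_smul_left, real_inner_smul_left, normalize_neg, inner_neg_left,
      inner_normalize_self, ← hc]
    ring
  have hHq := abs_le_of_lipschitzWith_posHomogeneous hLip hHom q
  have hHp := abs_le_of_lipschitzWith_posHomogeneous hLip hHom p
  have hcp : |c| ≤ ‖p‖ :=
    (abs_real_inner_le_norm q p).trans (mul_le_of_le_one_left (norm_nonneg p) hq)
  have hHqc : H q * c ≤ K * ‖p‖ := calc
    H q * c ≤ |H q| * |c| := by rw [← abs_mul]; exact le_abs_self _
    _ ≤ (K * 1) * ‖p‖ := by gcongr; exact hHq.trans (by gcongr)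
    _ = K * ‖p‖ := by ring
  rw [hval]
  linarith [neg_abs_le (H p)]

theorem inner_maxMinVector_normalize_orthogonal_le (hLip : LipschitzWith K H)
    (hHom : ∀ (p : E) (c : ℝ), 0 ≤ c → H (c • p) = c * H p) {q p : E} (hq : q = 0 ∨ ‖q‖ = 1)
    (hnonneg : 0 ≤ ⟪q, p⟫) :
    ⟪maxMinVector H K q (normalize (-(p - ⟪q, p⟫ • q))), p⟫ ≤ H p := by
  set c := ⟪q, p⟫ with hc
  set P := p - c • q with hP
  have hPq : ⟪P, q⟫ = 0 := by
    rcases hq with rfl | hq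
    · simp
    · rw [hP, inner_sub_left, real_inner_smul_left, real_inner_self_eq_norm_sq, hq,
        real_inner_comm, ← hc]
      ring
  have ht : ⟪normalize (-P), q⟫ = 0 := by
    rw [normalize_neg, inner_neg_left, NormedSpace.normalize, real_inner_smul_left, hPq]
    simp
  have hPp : ⟪normalize P, p⟫ = ‖P‖ := by
    have : p = P + c • q := by rw [hP]; abel
    rw [this, inner_add_right, inner_normalize_self, real_inner_smul_right,
      NormedSpace.normalize, real_inner_smul_left, hPq]
    ring
  have hval : ⟪maxMinVector H K q (normalize (-P)), p⟫ = H q * c - 2 * K * ‖P‖ := by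
    rw [maxMinVector, ht, inner_add_left, real_inner_smul_left, real_inner_smul_left,
      normalize_neg, inner_neg_left, hPp, ← hc]
    simp only [abs_zero, sub_zero, mul_zero, add_zero]
    ring
  have hray := smul_sub_le_of_lipschitzWith_posHomogeneous hLip hHom hnonneg p q
  rw [hval]
  nlinarith [norm_nonneg P, K.2]

theorem exists_inner_maxMinVector_le (hLip : LipschitzWith K H)
    (hHom : ∀ (p : E) (c : ℝ), 0 ≤ c → H (c • p) = c * H p) {q : E} (hq : q = 0 ∨ ‖q‖ = 1)
    (p : E) : ∃ w, ⟪maxMinVector H K q (normalize w), p⟫ ≤ H p := by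
  rcases lt_or_ge ⟪q, p⟫ 0 with hneg | hnonneg
  · have hq₁ : ‖q‖ ≤ 1 := by rcases hq with rfl | hq <;> simp [*]
    exact ⟨-p, inner_maxMinVector_normalize_neg_le hLip hHom hq₁ hneg⟩
  · exact ⟨_, inner_maxMinVector_normalize_orthogonal_le hLip hHom hq hnonneg⟩

theorem isGreatest_maxMinVector (hLip : LipschitzWith K H)
    (hHom : ∀ (p : E) (c : ℝ), 0 ≤ c → H (c • p) = c * H p) (p : E) :
    IsGreatest {y | ∃ v ∈ closedBall (0 : E) 1, IsLeast
      {z | ∃ u ∈ closedBall (0 : E) 1, z = ⟪maxMinVector H K (normalize v) (normalize u), p⟫} y}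
      (H p) := by
  refine isGreatest_setOf_isLeast (u₀ := 0) (v₀ := normalize p)
    (mem_closedBall_self zero_le_one) (by simpa using norm_normalize_le p) ?_ ?_ ?_
  · intro u _
    rw [normalize_normalize, inner_maxMinVector_normalize_self hHom]
    exact le_add_of_nonneg_right (by positivity)
  · simp [inner_maxMinVector_normalize_self hHom]
  · intro v _
    obtain ⟨w, hw⟩ := exists_inner_maxMinVector_le hLip hHom
      (normalize_eq_zero_or_norm_eq_one v) p
    exact ⟨normalize w, by simpa using norm_normalize_le w, by rwa [normalize_normalize]⟩

end MaxMinVector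

/-- Lemma 6.2: a positively homogeneous, Lipschitz (in `p`) Hamiltonian
admits a max-min representation `H t x p = max_{v ∈ V} min_{u ∈ U} ⟪X t x u v, p⟫`
with compact control sets `U ⊆ ℝ^{2n'}`, `V ⊆ ℝ^{2mn'}` and bounded vector fields `X`. -/
theorem maxmin_representation_homogeneous {m n : ℕ}
    (Ω : Set (EuclideanSpace ℝ (Fin m)))
    (H : EuclideanSpace ℝ (Fin m) → EuclideanSpace ℝ (Fin n) →
      EuclideanSpace ℝ (Fin (m * n)) → ℝ)
    (K : ℝ)
    (hLip : ∀ t ∈ Ω, ∀ (x : EuclideanSpace ℝ (Fin n))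
      (p q : EuclideanSpace ℝ (Fin (m * n))), |H t x p - H t x q| ≤ K * ‖p - q‖)
    (hHom : ∀ t ∈ Ω, ∀ (x : EuclideanSpace ℝ (Fin n))
      (p : EuclideanSpace ℝ (Fin (m * n))) (lam : ℝ), 0 ≤ lam →
        H t x (lam • p) = lam * H t x p) :
    ∃ (n' : ℕ) (U : Set (EuclideanSpace ℝ (Fin (2 * n'))))
      (V : Set (EuclideanSpace ℝ (Fin (2 * (m * n')))))
      (X : EuclideanSpace ℝ (Fin m) → EuclideanSpace ℝ (Fin n) →
        EuclideanSpace ℝ (Fin (2 * n')) → EuclideanSpace ℝ (Fin (2 * (m * n'))) →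
        EuclideanSpace ℝ (Fin (m * n))) (A : ℝ),
      IsCompact U ∧ IsCompact V ∧ U.Nonempty ∧ V.Nonempty ∧
      (∀ t x u v, ‖X t x u v‖ ≤ A) ∧
      (∀ t ∈ Ω, ∀ (x : EuclideanSpace ℝ (Fin n))
        (p : EuclideanSpace ℝ (Fin (m * n))),
        IsGreatest {y : ℝ | ∃ v ∈ V,
          IsLeast {z : ℝ | ∃ u ∈ U, z = ⟪X t x u v, p⟫} y} (H t x p)) := by
  classical
  have hLip' : ∀ t ∈ Ω, ∀ x, LipschitzWith K.toNNReal (H t x) := fun t ht x =>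
    .of_dist_le' fun p q => by rw [Real.dist_eq, dist_eq_norm]; exact hLip t ht x p q
  obtain ⟨ιU, πU, hU⟩ := exists_continuousLinearMap_leftInverse_of_finrank_le (𝕜 := ℝ)
    (E := EuclideanSpace ℝ (Fin (m * n))) (F := EuclideanSpace ℝ (Fin (2 * (m * n))))
    (by simp only [finrank_euclideanSpace_fin]; omega)
  obtain ⟨ιV, πV, hV⟩ := exists_continuousLinearMap_leftInverse_of_finrank_le (𝕜 := ℝ)
    (E := EuclideanSpace ℝ (Fin (m * n))) (F := EuclideanSpace ℝ (Fin (2 * (m * (m * n)))))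
    (by
      rcases m.eq_zero_or_pos with rfl | hm
      · simp
      · simp only [finrank_euclideanSpace_fin]
        nlinarith [Nat.le_mul_of_pos_left (m * n) hm])
  refine ⟨m * n, ιU '' closedBall 0 1, ιV '' closedBall 0 1, fun t x u v =>
      if t ∈ Ω then maxMinVector (H t x) K.toNNReal (normalize (πV v)) (normalize (πU u))
      else 0, 7 * K.toNNReal, (isCompact_closedBall 0 1).image ιU.continuous,
    (isCompact_closedBall 0 1).image ιV.continuous, ⟨ιU 0, 0, by simp⟩, ⟨ιV 0, 0, by simp⟩,
    fun t x u v => ?_, fun t ht x p => ?_⟩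
  · dsimp only
    split_ifs with ht
    · exact norm_maxMinVector_le (hLip' t ht x) (hHom t ht x) (norm_normalize_le _)
        (norm_normalize_le _)
    · simp
  · simp only [if_pos ht]
    rw [setOf_isLeast_image_leftInverse hU hV _ _
      (fun v u => ⟪maxMinVector (H t x) K.toNNReal (normalize v) (normalize u), p⟫)]
    exact isGreatest_maxMinVector (hLip' t ht x) (hHom t ht x) p
end

section
/- Let L be bounded: |L(s, x, u, v)| ≤ C and C-Lipschitz in x: |L(s,x,u,v) - L(s,x̂,u,v)| ≤ C‖x - x̂‖, and g be bounded by B and B-Lipschitz. Let x₁(·), x₂(·) be two trajectories defined on the box Ω_{t₂T} with ‖x₁(s) - x₂(s)‖ ≤ δ for all s ∈ Ω_{t₂T}, and let x₁ additionally be defined on Ω_{t₁t₂}. Then |∫_{Ω_{t₁T}} L(s, x₁(s), u(s), v(s)) ds + g(x₁(T)) - ∫_{Ω_{t₂T}} L(s, x₂(s), u(s), v(s)) ds - g(x₂(T))| ≤ C·vol(Ω_{t₁T} \ Ω_{t₂T}) + (C·vol(Ω_{t₂T}) + B)·δ. -/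
open MeasureTheory

/-- payoff comparison estimate from Theorem 4.1: with `L` bounded
by `C` and `C`-Lipschitz in `x`, `g` bounded by `B` and `B`-Lipschitz, and two
trajectories `δ`-close on the box `Ω_{t₂T}`, the payoffs differ by at most
`C·vol(Ω_{t₁T} \ Ω_{t₂T}) + (C·vol(Ω_{t₂T}) + B)·δ`. -/
theorem payoff_comparison {m n : ℕ} {U V : Type*}
    (t₁ t₂ T : Fin m → ℝ) (h12 : t₁ ≤ t₂) (h2T : t₂ ≤ T)
    (L : (Fin m → ℝ) → EuclideanSpace ℝ (Fin n) → U → V → ℝ)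
    (g : EuclideanSpace ℝ (Fin n) → ℝ) (B C δ : ℝ) (hδ : 0 ≤ δ)
    (hLbd : ∀ s x u v, |L s x u v| ≤ C)
    (hLlip : ∀ s x x' u v, |L s x u v - L s x' u v| ≤ C * ‖x - x'‖)
    (hgbd : ∀ x, |g x| ≤ B)
    (hglip : ∀ x x', |g x - g x'| ≤ B * ‖x - x'‖)
    (x₁ x₂ : (Fin m → ℝ) → EuclideanSpace ℝ (Fin n))
    (u : (Fin m → ℝ) → U) (v : (Fin m → ℝ) → V)
    (hclose : ∀ s ∈ Set.Icc t₂ T, ‖x₁ s - x₂ s‖ ≤ δ)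
    (hint₁ : IntegrableOn (fun s => L s (x₁ s) (u s) (v s)) (Set.Icc t₁ T))
    (hint₂ : IntegrableOn (fun s => L s (x₂ s) (u s) (v s)) (Set.Icc t₂ T)) :
    |(∫ s in Set.Icc t₁ T, L s (x₁ s) (u s) (v s)) + g (x₁ T)
      - (∫ s in Set.Icc t₂ T, L s (x₂ s) (u s) (v s)) - g (x₂ T)| ≤
      C * (volume (Set.Icc t₁ T \ Set.Icc t₂ T)).toReal
        + (C * (volume (Set.Icc t₂ T)).toReal + B) * δ := by
  have hC : 0 ≤ C := le_trans (abs_nonneg _) (hLbd t₁ (x₁ t₁) (u t₁) (v t₁))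
  have hB : 0 ≤ B := le_trans (abs_nonneg _) (hgbd (x₁ T))
  set S := Set.Icc t₁ T
  set Sm := Set.Icc t₂ T
  have hsub : Sm ⊆ S := Set.Icc_subset_Icc h12 le_rfl
  have hmS : MeasurableSet Sm := measurableSet_Icc
  have hvolS : volume S < ⊤ := (isCompact_Icc).measure_lt_top
  have hvolSm : volume Sm < ⊤ := (isCompact_Icc).measure_lt_top
  have hvolD : volume (S \ Sm) < ⊤ := lt_of_le_of_lt (measure_mono Set.diff_subset) hvolS
  have hint₁' : IntegrableOn (fun s => L s (x₁ s) (u s) (v s)) Sm := hint₁.mono_set hsub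
  have hsplit : ∫ s in S \ Sm, L s (x₁ s) (u s) (v s)
      = (∫ s in S, L s (x₁ s) (u s) (v s)) - ∫ s in Sm, L s (x₁ s) (u s) (v s) :=
    integral_diff hmS hint₁ hsub
  have h1 : ‖∫ s in S \ Sm, L s (x₁ s) (u s) (v s)‖ ≤ C * (volume (S \ Sm)).toReal := by
    refine norm_setIntegral_le_of_norm_le_const hvolD (fun s _ => ?_)
    · exact hLbd s (x₁ s) (u s) (v s)
  have h2 : ‖∫ s in Sm, (L s (x₁ s) (u s) (v s) - L s (x₂ s) (u s) (v s))‖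
      ≤ (C * δ) * (volume Sm).toReal := by
    refine norm_setIntegral_le_of_norm_le_const hvolSm (fun s hs => ?_)
    · calc ‖L s (x₁ s) (u s) (v s) - L s (x₂ s) (u s) (v s)‖
          ≤ C * ‖x₁ s - x₂ s‖ := hLlip s (x₁ s) (x₂ s) (u s) (v s)
        _ ≤ C * δ := mul_le_mul_of_nonneg_left (hclose s hs) hC
  have hTmem : T ∈ Sm := Set.right_mem_Icc.mpr h2T
  have h3 : |g (x₁ T) - g (x₂ T)| ≤ B * δ :=
    le_trans (hglip _ _) (mul_le_mul_of_nonneg_left (hclose T hTmem) hB)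
  have hdiff : ∫ s in Sm, (L s (x₁ s) (u s) (v s) - L s (x₂ s) (u s) (v s))
      = (∫ s in Sm, L s (x₁ s) (u s) (v s)) - ∫ s in Sm, L s (x₂ s) (u s) (v s) :=
    integral_sub hint₁' hint₂
  have key : (∫ s in S, L s (x₁ s) (u s) (v s)) + g (x₁ T)
      - (∫ s in Sm, L s (x₂ s) (u s) (v s)) - g (x₂ T)
      = (∫ s in S \ Sm, L s (x₁ s) (u s) (v s))
        + (∫ s in Sm, (L s (x₁ s) (u s) (v s) - L s (x₂ s) (u s) (v s)))
        + (g (x₁ T) - g (x₂ T)) := by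
    rw [hsplit, hdiff]; ring
  rw [key]
  calc |(∫ s in S \ Sm, L s (x₁ s) (u s) (v s))
        + (∫ s in Sm, (L s (x₁ s) (u s) (v s) - L s (x₂ s) (u s) (v s)))
        + (g (x₁ T) - g (x₂ T))|
      ≤ |∫ s in S \ Sm, L s (x₁ s) (u s) (v s)|
        + |∫ s in Sm, (L s (x₁ s) (u s) (v s) - L s (x₂ s) (u s) (v s))|
        + |g (x₁ T) - g (x₂ T)| := abs_add_three _ _ _
    _ ≤ C * (volume (S \ Sm)).toReal + (C * δ) * (volume Sm).toReal + B * δ := by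
        exact add_le_add (add_le_add h1 h2) h3
    _ = C * (volume (S \ Sm)).toReal + (C * (volume Sm).toReal + B) * δ := by ring
end
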